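/- Let μ be a nonzero finite Borel measure on ℝ^d with compact support, X ∈ ℝ^d, and d* = dist(X, supp μ). Assume that μ({y : ‖X − y‖ < d* + δ}) > 0 for every δ > 0. Then for every ε > 0, lim_{t→0⁺} ( ∫_{{y : ‖X − y‖ ≥ d* + ε}} exp(−‖X − y e^{−t/2}‖²/(2(1−e^{−t}))) dμ(y) ) / ( ∫_{ℝ^d} exp(−‖X − y e^{−t/2}‖²/(2(1−e^{−t}))) dμ(y) ) = 0. -/

import Mathlib

open MeasureTheory Real Filter Topology

noncomputable section

/-- The (topological) support of a Borel measure: points all of whose open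
neighborhoods have positive measure. -/
def msupport {α : Type*} [TopologicalSpace α] [MeasurableSpace α] (μ : Measure α) : Set α :=
  {x | ∀ U : Set α, IsOpen U → x ∈ U → 0 < μ U}

/-- The Gaussian weight `exp(-‖X - y e^{-t/2}‖² / (2 (1 - e^{-t})))`. -/
def gkernel {d : ℕ} (X y : EuclideanSpace ℝ (Fin d)) (t : ℝ) : ℝ :=
  Real.exp (-‖X - Real.exp (-t / 2) • y‖ ^ 2 / (2 * (1 - Real.exp (-t))))

/-- `p_μ(X,t) = ∫ exp(-‖X - y e^{-t/2}‖²/(2(1-e^{-t}))) dμ(y)`. -/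
def pfun {d : ℕ} (μ : Measure (EuclideanSpace ℝ (Fin d)))
    (X : EuclideanSpace ℝ (Fin d)) (t : ℝ) : ℝ :=
  ∫ y, gkernel X y t ∂μ

/-- The score function
`S_μ(X,t) = (∫ ((X - y e^{-t/2})/(1-e^{-t})) exp(-‖X - y e^{-t/2}‖²/(2(1-e^{-t}))) dμ(y)) / p_μ(X,t)`. -/
def score {d : ℕ} (μ : Measure (EuclideanSpace ℝ (Fin d)))
    (X : EuclideanSpace ℝ (Fin d)) (t : ℝ) : EuclideanSpace ℝ (Fin d) :=
  (pfun μ X t)⁻¹ •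
    ∫ y, ((1 - Real.exp (-t))⁻¹ * gkernel X y t) • (X - Real.exp (-t / 2) • y) ∂μ

/-- The denoiser
`f_μ(X,t) = (∫ y exp(-‖X - y e^{-t/2}‖²/(2(1-e^{-t}))) dμ(y)) / p_μ(X,t)`. -/
def denoiser {d : ℕ} (μ : Measure (EuclideanSpace ℝ (Fin d)))
    (X : EuclideanSpace ℝ (Fin d)) (t : ℝ) : EuclideanSpace ℝ (Fin d) :=
  (pfun μ X t)⁻¹ • ∫ y, (gkernel X y t) • y ∂μ

lemma msupport_compl_null {α : Type*} [TopologicalSpace α] [MeasurableSpace α]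
    [SecondCountableTopology α] (μ : Measure α) :
    μ (msupport μ)ᶜ = 0 := by
  have hset : (msupport μ)ᶜ = ⋃₀ {U : Set α | IsOpen U ∧ μ U = 0} := by
    ext x
    simp only [Set.mem_compl_iff, msupport, Set.mem_setOf_eq, not_forall, Set.mem_sUnion]
    constructor
    · rintro ⟨U, hU, hxU, hpos⟩
      exact ⟨U, ⟨hU, le_zero_iff.mp (not_lt.mp hpos)⟩, hxU⟩
    · rintro ⟨U, ⟨hU, hU0⟩, hxU⟩
      exact ⟨U, hU, hxU, by simp [hU0]⟩
  obtain ⟨T, hTc, hTsub, hTU⟩ :=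
    TopologicalSpace.isOpen_sUnion_countable {U : Set α | IsOpen U ∧ μ U = 0}
      (fun U hU => hU.1)
  rw [hset, ← hTU]
  exact (measure_sUnion_null_iff hTc).mpr fun s hs => (hTsub hs).2

lemma gkernel_cont {d : ℕ} (X : EuclideanSpace ℝ (Fin d)) (t : ℝ) :
    Continuous fun y => gkernel X y t := by
  unfold gkernel; fun_prop

lemma gkernel_pos {d : ℕ} (X y : EuclideanSpace ℝ (Fin d)) (t : ℝ) : 0 < gkernel X y t :=
  Real.exp_pos _

lemma gkernel_le_one {d : ℕ} (X y : EuclideanSpace ℝ (Fin d)) {t : ℝ} (ht : 0 < t) :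
    gkernel X y t ≤ 1 := by
  unfold gkernel
  rw [Real.exp_le_one_iff]
  apply div_nonpos_of_nonpos_of_nonneg
  · exact neg_nonpos.mpr (by positivity)
  · have : Real.exp (-t) < 1 := Real.exp_lt_one_iff.mpr (by linarith)
    linarith

lemma gkernel_integrable {d : ℕ} (μ : Measure (EuclideanSpace ℝ (Fin d))) [IsFiniteMeasure μ]
    (X : EuclideanSpace ℝ (Fin d)) {t : ℝ} (ht : 0 < t) :
    Integrable (fun y => gkernel X y t) μ := by
  refine Integrable.mono' (integrable_const 1) (gkernel_cont X t).aestronglyMeasurable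
    (ae_of_all _ fun y => ?_)
  rw [Real.norm_eq_abs, abs_of_pos (gkernel_pos X y t)]
  exact gkernel_le_one X y ht

/-- The relative mass of the Gaussian weights carried by points at distance at least
`d* + ε` from `X` vanishes as `t → 0⁺`, where `d* = dist(X, supp μ)`. -/
theorem far_mass_ratio_tendsto_zero {d : ℕ}
    (μ : Measure (EuclideanSpace ℝ (Fin d))) [IsFiniteMeasure μ] (hμ : μ ≠ 0)
    (hcompact : IsCompact (msupport μ))
    (X : EuclideanSpace ℝ (Fin d))
    (hnear : ∀ δ : ℝ, 0 < δ →
      0 < μ {y | ‖X - y‖ < Metric.infDist X (msupport μ) + δ}) :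
    ∀ ε : ℝ, 0 < ε →
      Tendsto (fun t =>
          (∫ y in {y | Metric.infDist X (msupport μ) + ε ≤ ‖X - y‖}, gkernel X y t ∂μ) /
            ∫ y, gkernel X y t ∂μ)
        (𝓝[>] (0 : ℝ)) (𝓝 0) := by
  intro ε hε
  set D : ℝ := Metric.infDist X (msupport μ) with hDdef
  have hD0 : 0 ≤ D := Metric.infDist_nonneg
  obtain ⟨M, hM⟩ := hcompact.isBounded.subset_closedBall 0
  set R : ℝ := max M (‖X‖ + D + ε) with hRdef
  have hRpos : 0 < R :=
    lt_of_lt_of_le (by have := norm_nonneg X; linarith) (le_max_right _ _)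
  have hMR : M ≤ R := le_max_left _ _
  have hXR : ‖X‖ + D + ε ≤ R := le_max_right _ _
  set F : Set (EuclideanSpace ℝ (Fin d)) := {y | D + ε ≤ ‖X - y‖} with hFdef
  set N : Set (EuclideanSpace ℝ (Fin d)) := {y | ‖X - y‖ < D + ε / 4} with hNdef
  have hNmeas : MeasurableSet N :=
    measurableSet_lt (by fun_prop) measurable_const
  have hFmeas : MeasurableSet F :=
    measurableSet_le measurable_const (by fun_prop)
  have hμN : 0 < μ N := hnear (ε / 4) (by linarith)
  set m : ℝ := (μ N).toReal with hm
  have hmpos : 0 < m := ENNReal.toReal_pos hμN.ne' (measure_ne_top μ N)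
  set A : ℝ := (μ Set.univ).toReal with hA
  have hApos : 0 < A :=
    ENNReal.toReal_pos (Measure.measure_univ_pos.mpr hμ).ne' (measure_ne_top μ _)
  set c : ℝ := (D + 3 * ε / 4) ^ 2 - (D + ε / 2) ^ 2 with hc
  have hcpos : 0 < c := by
    have : (D + ε / 2) ^ 2 < (D + 3 * ε / 4) ^ 2 := by
      apply pow_lt_pow_left₀ (by linarith) (by linarith)
      norm_num
    simpa [hc] using sub_pos.mpr this
  set G : ℝ → ℝ := fun t => (A / m) * Real.exp (-c / (2 * (1 - Real.exp (-t)))) with hG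
  have hGtendsto : Tendsto G (𝓝[>] (0 : ℝ)) (𝓝 0) := by
    have h1 : Tendsto (fun t : ℝ => 2 * (1 - Real.exp (-t))) (𝓝[>] (0 : ℝ)) (𝓝[>] (0 : ℝ)) := by
      rw [tendsto_nhdsWithin_iff]
      constructor
      · apply Tendsto.mono_left _ nhdsWithin_le_nhds
        have : Continuous fun t : ℝ => 2 * (1 - Real.exp (-t)) := by fun_prop
        simpa using this.tendsto 0
      · filter_upwards [self_mem_nhdsWithin] with t ht
        have : Real.exp (-t) < 1 := Real.exp_lt_one_iff.mpr (by simpa using ht)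
        simp only [Set.mem_Ioi]
        linarith
    have h2 : Tendsto (fun t : ℝ => (2 * (1 - Real.exp (-t)))⁻¹) (𝓝[>] (0 : ℝ)) atTop :=
      tendsto_inv_nhdsGT_zero.comp h1
    have h3 : Tendsto (fun t : ℝ => c * (2 * (1 - Real.exp (-t)))⁻¹) (𝓝[>] (0 : ℝ)) atTop :=
      h2.const_mul_atTop hcpos
    have h4 : Tendsto (fun t : ℝ => -(c * (2 * (1 - Real.exp (-t)))⁻¹)) (𝓝[>] (0 : ℝ)) atBot :=
      tendsto_neg_atTop_atBot.comp h3
    have h5 : Tendsto (fun t : ℝ => Real.exp (-(c * (2 * (1 - Real.exp (-t)))⁻¹)))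
        (𝓝[>] (0 : ℝ)) (𝓝 0) := Real.tendsto_exp_atBot.comp h4
    have := h5.const_mul (A / m)
    rw [mul_zero] at this
    refine this.congr fun t => ?_
    rw [hG]
    ring_nf
  have hsmall : ∀ᶠ t in 𝓝[>] (0 : ℝ), (1 - Real.exp (-t / 2)) * R ≤ ε / 4 := by
    have hcont : Tendsto (fun t : ℝ => (1 - Real.exp (-t / 2)) * R) (𝓝 0) (𝓝 0) := by
      have : Continuous fun t : ℝ => (1 - Real.exp (-t / 2)) * R := by fun_prop
      simpa using this.tendsto 0
    apply eventually_nhdsWithin_of_eventually_nhds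
    filter_upwards [hcont.eventually (eventually_le_nhds (by linarith : (0:ℝ) < ε / 4))] with t ht
    exact ht
  apply squeeze_zero' _ _ hGtendsto
  · filter_upwards [self_mem_nhdsWithin] with t ht
    apply div_nonneg
    · exact setIntegral_nonneg hFmeas fun y _ => (gkernel_pos X y t).le
    · exact integral_nonneg fun y => (gkernel_pos X y t).le
  · filter_upwards [self_mem_nhdsWithin, hsmall] with t ht ha
    have ht0 : 0 < t := ht
    have ha01 : 0 < Real.exp (-t / 2) := Real.exp_pos _
    have ha1 : Real.exp (-t / 2) ≤ 1 := Real.exp_le_one_iff.mpr (by linarith)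
    have hσ : 0 < 1 - Real.exp (-t) := by
      have : Real.exp (-t) < 1 := Real.exp_lt_one_iff.mpr (by linarith)
      linarith
    have hσpos : 0 < 2 * (1 - Real.exp (-t)) := by positivity
    have hint : Integrable (fun y => gkernel X y t) μ := gkernel_integrable μ X ht0
    have tri : ∀ y : EuclideanSpace ℝ (Fin d),
        ‖X - y‖ ≤ ‖X - Real.exp (-t / 2) • y‖ + (1 - Real.exp (-t / 2)) * ‖y‖ ∧
        ‖X - Real.exp (-t / 2) • y‖ ≤ ‖X - y‖ + (1 - Real.exp (-t / 2)) * ‖y‖ := by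
      intro y
      set a : ℝ := Real.exp (-t / 2)
      have h1 : X - y = (X - a • y) - (1 - a) • y := by
        rw [sub_smul, one_smul]; abel
      have h2 : X - a • y = (X - y) + (1 - a) • y := by
        rw [sub_smul, one_smul]; abel
      have hn : ‖(1 - a) • y‖ = (1 - a) * ‖y‖ := by
        rw [norm_smul, Real.norm_eq_abs, abs_of_nonneg (by linarith)]
      constructor
      · calc ‖X - y‖ = ‖(X - a • y) - (1 - a) • y‖ := by rw [← h1]
          _ ≤ ‖X - a • y‖ + ‖(1 - a) • y‖ := norm_sub_le _ _
          _ = ‖X - a • y‖ + (1 - a) * ‖y‖ := by rw [hn]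
      · calc ‖X - a • y‖ = ‖(X - y) + (1 - a) • y‖ := by rw [← h2]
          _ ≤ ‖X - y‖ + ‖(1 - a) • y‖ := norm_add_le _ _
          _ = ‖X - y‖ + (1 - a) * ‖y‖ := by rw [hn]
    -- numerator bound
    set B₁ : ℝ := Real.exp (-(D + 3 * ε / 4) ^ 2 / (2 * (1 - Real.exp (-t)))) with hB1
    set B₂ : ℝ := Real.exp (-(D + ε / 2) ^ 2 / (2 * (1 - Real.exp (-t)))) with hB2
    have hB1pos : 0 < B₁ := Real.exp_pos _
    have hB2pos : 0 < B₂ := Real.exp_pos _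
    have hnum : (∫ y in F, gkernel X y t ∂μ) ≤ B₁ * A := by
      have hae : ∀ᵐ y ∂(μ.restrict F), gkernel X y t ≤ B₁ := by
        have h1 : ∀ᵐ y ∂(μ.restrict F), y ∈ msupport μ :=
          ae_restrict_of_ae (mem_ae_iff.mpr (msupport_compl_null μ))
        filter_upwards [h1, ae_restrict_mem hFmeas] with y hy hyF
        have hyR : ‖y‖ ≤ R := le_trans (mem_closedBall_zero_iff.mp (hM hy)) hMR
        have h1a : (1 - Real.exp (-t / 2)) * ‖y‖ ≤ ε / 4 := by
          calc (1 - Real.exp (-t / 2)) * ‖y‖ ≤ (1 - Real.exp (-t / 2)) * R :=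
                mul_le_mul_of_nonneg_left hyR (by linarith)
            _ ≤ ε / 4 := ha
        have hF' : D + ε ≤ ‖X - y‖ := hyF
        have hlow : D + 3 * ε / 4 ≤ ‖X - Real.exp (-t / 2) • y‖ := by
          have := (tri y).1
          linarith
        rw [gkernel, hB1]
        apply Real.exp_le_exp.mpr
        apply div_le_div_of_nonneg_right _ hσpos.le
        · apply neg_le_neg
          exact pow_le_pow_left₀ (by linarith) hlow 2
      calc (∫ y in F, gkernel X y t ∂μ) ≤ ∫ _y in F, B₁ ∂μ :=
            integral_mono_ae hint.restrict (integrable_const _) hae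
        _ = (μ F).toReal * B₁ := by rw [setIntegral_const, smul_eq_mul, measureReal_def]
        _ ≤ A * B₁ := by
            apply mul_le_mul_of_nonneg_right _ hB1pos.le
            exact ENNReal.toReal_mono (measure_ne_top μ _) (measure_mono (Set.subset_univ _))
        _ = B₁ * A := mul_comm _ _
    -- denominator bound
    have hden1 : B₂ * m ≤ ∫ y in N, gkernel X y t ∂μ := by
      have hpt : ∀ y ∈ N, B₂ ≤ gkernel X y t := by
        intro y hyN
        have hyN' : ‖X - y‖ < D + ε / 4 := hyN
        have hyR : ‖y‖ ≤ R := by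
          have h1 := norm_sub_norm_le y X
          have h2 : ‖y - X‖ = ‖X - y‖ := norm_sub_rev _ _
          linarith
        have h1a : (1 - Real.exp (-t / 2)) * ‖y‖ ≤ ε / 4 := by
          calc (1 - Real.exp (-t / 2)) * ‖y‖ ≤ (1 - Real.exp (-t / 2)) * R :=
                mul_le_mul_of_nonneg_left hyR (by linarith)
            _ ≤ ε / 4 := ha
        have hup : ‖X - Real.exp (-t / 2) • y‖ ≤ D + ε / 2 := by
          have := (tri y).2
          linarith
        rw [gkernel, hB2]
        apply Real.exp_le_exp.mpr
        apply div_le_div_of_nonneg_right _ hσpos.le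
        · apply neg_le_neg
          exact pow_le_pow_left₀ (norm_nonneg _) hup 2
      calc B₂ * m = (μ N).toReal • B₂ := by rw [smul_eq_mul, mul_comm]
        _ = ∫ _y in N, B₂ ∂μ := (setIntegral_const _).symm
        _ ≤ ∫ y in N, gkernel X y t ∂μ :=
            setIntegral_mono_on (integrableOn_const (measure_ne_top μ N))
              hint.integrableOn hNmeas hpt
    have hden : B₂ * m ≤ ∫ y, gkernel X y t ∂μ :=
      hden1.trans (setIntegral_le_integral hint (ae_of_all _ fun y => (gkernel_pos X y t).le))
    calc (∫ y in F, gkernel X y t ∂μ) / ∫ y, gkernel X y t ∂μ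
        ≤ (B₁ * A) / (B₂ * m) := by
          apply div_le_div₀ (by positivity) hnum (by positivity) hden
      _ = (A / m) * (B₁ / B₂) := by field_simp
      _ = G t := by
          rw [hB1, hB2, ← Real.exp_sub, hG]
          congr 1
          rw [div_sub_div_same, hc]
          ring
  done
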